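/- Let K be a nonarchimedean local field with ring of integers 𝔬, maximal ideal 𝔭, and residue field of cardinality q. Let I be the standard Iwahori subgroup of GL(2,K), let s = [[0,1],[1,0]] ∈ GL(2,K), and let μ be a (left and right invariant) Haar measure on the locally compact group GL(2,K) normalized so that μ(I) = 1. Then for every g ∈ GL(2,K): ∫_{GL(2,K)} 1_{IsI}(g y) · 1_{IsI}(y^{−1}) dμ(y) = (q − 1)·1_{IsI}(g) + q·1_I(g), where 1_A denotes the characteristic function of a set A. (This is the quadratic relation e_s ⋆ e_s = (q−1)e_s + q·e_1 of the Iwahori–Matsumoto presentation of the Iwahori–Hecke algebra.) -/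

import Mathlib

open Matrix MeasureTheory

set_option linter.unusedSectionVars false
set_option maxHeartbeats 1000000

section HeckeQuadraticRelation

variable (R K : Type*)
  [CommRing R] [IsDomain R] [IsDiscreteValuationRing R]
  [Finite (IsLocalRing.ResidueField R)] [IsAdicComplete (IsLocalRing.maximalIdeal R) R]
  [Field K] [Algebra R K] [IsFractionRing R K]

/-- The standard Iwahori subgroup of `GL(2, K)`: the set of `g ∈ GL(2, 𝔬)` (both `g` and
`g⁻¹` have entries in `𝔬`) whose lower-left entry lies in `𝔭`. -/
def IwahoriSet2 : Set (GL (Fin 2) K) :=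
  {g | (∀ i j : Fin 2, ∃ r : R, (g : Matrix (Fin 2) (Fin 2) K) i j = algebraMap R K r) ∧
       (∀ i j : Fin 2, ∃ r : R,
         ((g⁻¹ : GL (Fin 2) K) : Matrix (Fin 2) (Fin 2) K) i j = algebraMap R K r) ∧
       (∃ r ∈ IsLocalRing.maximalIdeal R,
         (g : Matrix (Fin 2) (Fin 2) K) 1 0 = algebraMap R K r)}

/-- The double coset `I s I` of an element `s ∈ GL(2,K)` with respect to the standard
Iwahori subgroup `I`. -/
def doubleCoset (s : GL (Fin 2) K) : Set (GL (Fin 2) K) :=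
  {x | ∃ a ∈ IwahoriSet2 R K, ∃ b ∈ IwahoriSet2 R K, x = a * s * b}


end HeckeQuadraticRelation

/-! ### Auxiliary R-level development -/


section Aux
variable (R : Type*) [CommRing R] [IsDomain R] [IsDiscreteValuationRing R]

local notation "𝔪" => IsLocalRing.maximalIdeal R

/-- R-level Iwahori set. -/
def IwR : Set (GL (Fin 2) R) := {G | (G : Matrix (Fin 2) (Fin 2) R) 1 0 ∈ 𝔪}

variable {R}

lemma isUnit_val (G : GL (Fin 2) R) : IsUnit (G : Matrix (Fin 2) (Fin 2) R) :=
  ⟨G, rfl⟩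

lemma isUnit_det (G : GL (Fin 2) R) : IsUnit ((G : Matrix (Fin 2) (Fin 2) R).det) :=
  (Matrix.isUnit_iff_isUnit_det _).1 (isUnit_val G)

lemma not_mem_max_of_isUnit {x : R} (h : IsUnit x) : x ∉ 𝔪 := by
  rw [IsLocalRing.mem_maximalIdeal]
  exact fun h' => h' h

lemma isUnit_of_not_mem_max {x : R} (h : x ∉ 𝔪) : IsUnit x := by
  by_contra h'
  exact h ((IsLocalRing.mem_maximalIdeal x).2 h')

lemma IwR_diag_isUnit {G : GL (Fin 2) R} (hG : G ∈ IwR R) :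
    IsUnit ((G : Matrix (Fin 2) (Fin 2) R) 0 0) ∧
    IsUnit ((G : Matrix (Fin 2) (Fin 2) R) 1 1) := by
  have hdet := isUnit_det G
  rw [Matrix.det_fin_two] at hdet
  have h01 : (G : Matrix (Fin 2) (Fin 2) R) 0 1 * (G : Matrix (Fin 2) (Fin 2) R) 1 0 ∈ 𝔪 :=
    Ideal.mul_mem_left _ _ hG
  constructor
  · apply isUnit_of_not_mem_max
    intro h
    exact not_mem_max_of_isUnit hdet
      (Submodule.sub_mem _ (Ideal.mul_mem_right _ _ h) h01)
  · apply isUnit_of_not_mem_max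
    intro h
    exact not_mem_max_of_isUnit hdet
      (Submodule.sub_mem _ (Ideal.mul_mem_left _ _ h) h01)

lemma IwR_one : (1 : GL (Fin 2) R) ∈ IwR R := by
  simp [IwR]

lemma IwR_mul {A B : GL (Fin 2) R} (hA : A ∈ IwR R) (hB : B ∈ IwR R) :
    A * B ∈ IwR R := by
  have : ((A * B : GL (Fin 2) R) : Matrix (Fin 2) (Fin 2) R) 1 0 =
      (A : Matrix (Fin 2) (Fin 2) R) 1 0 * (B : Matrix (Fin 2) (Fin 2) R) 0 0 +
      (A : Matrix (Fin 2) (Fin 2) R) 1 1 * (B : Matrix (Fin 2) (Fin 2) R) 1 0 := by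
    show ((A : Matrix (Fin 2) (Fin 2) R) * B) 1 0 = _
    rw [Matrix.mul_apply, Fin.sum_univ_two]
  unfold IwR
  rw [Set.mem_setOf_eq, this]
  exact Ideal.add_mem _ (Ideal.mul_mem_right _ _ hA) (Ideal.mul_mem_left _ _ hB)

lemma IwR_inv {A : GL (Fin 2) R} (hA : A ∈ IwR R) : A⁻¹ ∈ IwR R := by
  have hval : ((A⁻¹ : GL (Fin 2) R) : Matrix (Fin 2) (Fin 2) R)
      = ((A : Matrix (Fin 2) (Fin 2) R))⁻¹ := Matrix.coe_units_inv A
  unfold IwR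
  rw [Set.mem_setOf_eq, hval, Matrix.inv_def, Matrix.adjugate_fin_two]
  have : (Ring.inverse ((A : Matrix (Fin 2) (Fin 2) R)).det •
      (!![(A : Matrix (Fin 2) (Fin 2) R) 1 1, -(A : Matrix (Fin 2) (Fin 2) R) 0 1;
          -(A : Matrix (Fin 2) (Fin 2) R) 1 0, (A : Matrix (Fin 2) (Fin 2) R) 0 0] :
        Matrix (Fin 2) (Fin 2) R)) 1 0
      = Ring.inverse ((A : Matrix (Fin 2) (Fin 2) R)).det *
        (-(A : Matrix (Fin 2) (Fin 2) R) 1 0) := by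
    simp [Matrix.smul_apply]
  rw [this]
  exact Ideal.mul_mem_left _ _ (neg_mem hA)

end Aux

section Aux
variable {R : Type*} [CommRing R] [IsDomain R] [IsDiscreteValuationRing R]

local notation "𝔪" => IsLocalRing.maximalIdeal R

/-- The swap matrix as a unit. -/
def Sw (R : Type*) [CommRing R] : GL (Fin 2) R :=
  ⟨!![0,1;1,0], !![0,1;1,0],
   by ext i j; fin_cases i <;> fin_cases j <;> simp [Matrix.mul_apply, Fin.sum_univ_two, Matrix.one_apply],
   by ext i j; fin_cases i <;> fin_cases j <;> simp [Matrix.mul_apply, Fin.sum_univ_two, Matrix.one_apply]⟩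

/-- Upper unipotent. -/
def upp {R : Type*} [CommRing R] (x : R) : GL (Fin 2) R :=
  ⟨!![1,x;0,1], !![1,-x;0,1],
   by ext i j; fin_cases i <;> fin_cases j <;> simp [Matrix.mul_apply, Fin.sum_univ_two, Matrix.one_apply],
   by ext i j; fin_cases i <;> fin_cases j <;> simp [Matrix.mul_apply, Fin.sum_univ_two, Matrix.one_apply]⟩

/-- Lower unipotent. -/
def low {R : Type*} [CommRing R] (x : R) : GL (Fin 2) R :=
  ⟨!![1,0;x,1], !![1,0;-x,1],
   by ext i j; fin_cases i <;> fin_cases j <;> simp [Matrix.mul_apply, Fin.sum_univ_two, Matrix.one_apply],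
   by ext i j; fin_cases i <;> fin_cases j <;> simp [Matrix.mul_apply, Fin.sum_univ_two, Matrix.one_apply]⟩

lemma Sw_mul_Sw : Sw R * Sw R = 1 := by
  apply Units.ext
  show (!![0,1;1,0] : Matrix (Fin 2) (Fin 2) R) * !![0,1;1,0] = 1
  ext i j
  fin_cases i <;> fin_cases j <;> simp [Matrix.mul_apply, Fin.sum_univ_two, Matrix.one_apply]

lemma Sw_inv : (Sw R)⁻¹ = Sw R := by
  rw [inv_eq_iff_mul_eq_one, Sw_mul_Sw]

lemma upp_mul (x y : R) : upp x * upp y = upp (x + y) := by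
  apply Units.ext
  show (!![1,x;0,1] : Matrix (Fin 2) (Fin 2) R) * !![1,y;0,1] = !![1,x+y;0,1]
  ext i j
  fin_cases i <;> fin_cases j <;> simp [Matrix.mul_apply, Fin.sum_univ_two] <;> ring

lemma upp_inv (x : R) : (upp x)⁻¹ = upp (-x) := by
  rw [inv_eq_iff_mul_eq_one, upp_mul]
  apply Units.ext
  show (!![1,x + -x;0,1] : Matrix (Fin 2) (Fin 2) R) = 1
  ext i j
  fin_cases i <;> fin_cases j <;> simp [Matrix.one_apply]

lemma Sw_upp_Sw (x : R) : Sw R * upp x * Sw R = low x := by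
  apply Units.ext
  show (!![0,1;1,0] : Matrix (Fin 2) (Fin 2) R) * !![1,x;0,1] * !![0,1;1,0] = !![1,0;x,1]
  ext i j
  fin_cases i <;> fin_cases j <;> simp [Matrix.mul_apply, Fin.sum_univ_two] <;> ring

end Aux

section Bruhat
variable {R : Type*} [CommRing R] [IsDomain R] [IsDiscreteValuationRing R]

local notation "𝔪" => IsLocalRing.maximalIdeal R

lemma val_mul_entry (A B : GL (Fin 2) R) (i j : Fin 2) :
    ((A * B : GL (Fin 2) R) : Matrix (Fin 2) (Fin 2) R) i j
      = (A : Matrix (Fin 2) (Fin 2) R) i 0 * (B : Matrix (Fin 2) (Fin 2) R) 0 j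
        + (A : Matrix (Fin 2) (Fin 2) R) i 1 * (B : Matrix (Fin 2) (Fin 2) R) 1 j := by
  show ((A : Matrix (Fin 2) (Fin 2) R) * (B : Matrix (Fin 2) (Fin 2) R)) i j = _
  rw [Matrix.mul_apply, Fin.sum_univ_two]

lemma Sw_val : ((Sw R : GL (Fin 2) R) : Matrix (Fin 2) (Fin 2) R) = !![0,1;1,0] := rfl
lemma upp_val (x : R) : ((upp x : GL (Fin 2) R) : Matrix (Fin 2) (Fin 2) R) = !![1,x;0,1] := rfl
lemma low_val (x : R) : ((low x : GL (Fin 2) R) : Matrix (Fin 2) (Fin 2) R) = !![1,0;x,1] := rfl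

lemma upp_mem_IwR (x : R) : upp x ∈ IwR R := by
  show (!![1,x;0,1] : Matrix (Fin 2) (Fin 2) R) 1 0 ∈ 𝔪
  simp

lemma low_mem_IwR_iff (x : R) : low x ∈ IwR R ↔ x ∈ 𝔪 := by
  show (!![1,0;x,1] : Matrix (Fin 2) (Fin 2) R) 1 0 ∈ 𝔪 ↔ x ∈ 𝔪
  simp

lemma conj10 (G : GL (Fin 2) R) :
    ((Sw R * G * Sw R : GL (Fin 2) R) : Matrix (Fin 2) (Fin 2) R) 1 0
      = (G : Matrix (Fin 2) (Fin 2) R) 0 1 := by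
  simp only [val_mul_entry, Sw_val]
  simp

lemma conj_unfold (a j c : GL (Fin 2) R) :
    a * (Sw R * j * Sw R) * Sw R * c = a * Sw R * (j * c) := by
  have h : a * (Sw R * j * Sw R) * Sw R * c = a * Sw R * j * (Sw R * Sw R) * c := by group
  rw [h, Sw_mul_Sw, mul_one, mul_assoc]

/-- Bruhat disjointness: `a S b` is never in the Iwahori. -/
lemma bruhat_disjoint {a b : GL (Fin 2) R} (ha : a ∈ IwR R) (hb : b ∈ IwR R) :
    a * Sw R * b ∉ IwR R := by
  intro hmem
  have h10 : ((a * Sw R * b : GL (Fin 2) R) : Matrix (Fin 2) (Fin 2) R) 1 0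
      = (a : Matrix (Fin 2) (Fin 2) R) 1 1 * (b : Matrix (Fin 2) (Fin 2) R) 0 0
        + (a : Matrix (Fin 2) (Fin 2) R) 1 0 * (b : Matrix (Fin 2) (Fin 2) R) 1 0 := by
    simp only [val_mul_entry, Sw_val]
    simp
  have hu : IsUnit ((a : Matrix (Fin 2) (Fin 2) R) 1 1 * (b : Matrix (Fin 2) (Fin 2) R) 0 0) :=
    ((IwR_diag_isUnit ha).2).mul ((IwR_diag_isUnit hb).1)
  apply not_mem_max_of_isUnit hu
  have : (a : Matrix (Fin 2) (Fin 2) R) 1 1 * (b : Matrix (Fin 2) (Fin 2) R) 0 0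
      = ((a * Sw R * b : GL (Fin 2) R) : Matrix (Fin 2) (Fin 2) R) 1 0
        - (a : Matrix (Fin 2) (Fin 2) R) 1 0 * (b : Matrix (Fin 2) (Fin 2) R) 1 0 := by
    rw [h10]; ring
  rw [this]
  exact Submodule.sub_mem _ hmem (Ideal.mul_mem_right _ _ ha)

/-- Bruhat covering. -/
lemma bruhat_cover (G : GL (Fin 2) R) :
    G ∈ IwR R ∨ ∃ a ∈ IwR R, ∃ b ∈ IwR R, G = a * Sw R * b := by
  by_cases hc : (G : Matrix (Fin 2) (Fin 2) R) 1 0 ∈ 𝔪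
  · exact Or.inl hc
  right
  obtain ⟨u, hu⟩ := isUnit_of_not_mem_max hc
  set z : R := -((G : Matrix (Fin 2) (Fin 2) R) 0 0 * ↑u⁻¹) with hz
  refine ⟨upp (-z), upp_mem_IwR _, Sw R * upp z * G, ?_, ?_⟩
  · -- (Sw * upp z * G) has lower-left entry G00 + z * G10 = 0
    show ((Sw R * upp z * G : GL (Fin 2) R) : Matrix (Fin 2) (Fin 2) R) 1 0 ∈ 𝔪
    have : ((Sw R * upp z * G : GL (Fin 2) R) : Matrix (Fin 2) (Fin 2) R) 1 0
        = (G : Matrix (Fin 2) (Fin 2) R) 0 0 + z * (G : Matrix (Fin 2) (Fin 2) R) 1 0 := by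
      simp only [val_mul_entry, Sw_val, upp_val]
      simp
    rw [this, hz, ← hu]
    have : (G : Matrix (Fin 2) (Fin 2) R) 0 0 + -((G : Matrix (Fin 2) (Fin 2) R) 0 0 * ↑u⁻¹) * ↑u
        = (G : Matrix (Fin 2) (Fin 2) R) 0 0 * (1 - ↑u⁻¹ * ↑u) := by ring
    rw [this, Units.inv_mul, sub_self, mul_zero]
    exact Submodule.zero_mem _
  · -- G = upp(-z) * Sw * (Sw * upp z * G)
    have : upp (-z) * Sw R * (Sw R * upp z * G)
        = upp (-z) * (Sw R * Sw R) * upp z * G := by group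
    rw [this, Sw_mul_Sw, mul_one, upp_mul, neg_add_cancel]
    have h1 : upp (0 : R) = 1 := by
      apply Units.ext
      show (!![1,(0:R);0,1] : Matrix (Fin 2) (Fin 2) R) = 1
      ext i j; fin_cases i <;> fin_cases j <;> simp [Matrix.one_apply]
    rw [h1, one_mul]

/-- the "J" subgroup at the R-level. -/
def JR (R : Type*) [CommRing R] [IsDomain R] [IsDiscreteValuationRing R] : Set (GL (Fin 2) R) :=
  {G | G ∈ IwR R ∧ Sw R * G * Sw R ∈ IwR R}

lemma JR_iff (G : GL (Fin 2) R) :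
    G ∈ JR R ↔ G ∈ IwR R ∧ (G : Matrix (Fin 2) (Fin 2) R) 0 1 ∈ 𝔪 := by
  unfold JR
  rw [Set.mem_setOf_eq]
  constructor
  · rintro ⟨h1, h2⟩
    refine ⟨h1, ?_⟩
    rw [← conj10 G]; exact h2
  · rintro ⟨h1, h2⟩
    refine ⟨h1, ?_⟩
    show (Sw R * G * Sw R : GL (Fin 2) R) ∈ IwR R
    show ((Sw R * G * Sw R : GL (Fin 2) R) : Matrix (Fin 2) (Fin 2) R) 1 0 ∈ 𝔪
    rw [conj10 G]; exact h2

lemma JR_mul {A B : GL (Fin 2) R} (hA : A ∈ JR R) (hB : B ∈ JR R) : A * B ∈ JR R := by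
  refine ⟨IwR_mul hA.1 hB.1, ?_⟩
  have : Sw R * (A * B) * Sw R = (Sw R * A * Sw R) * (Sw R * B * Sw R) := by
    have h := Sw_mul_Sw (R := R)
    calc Sw R * (A * B) * Sw R = Sw R * A * (Sw R * Sw R) * B * Sw R := by rw [h]; group
    _ = (Sw R * A * Sw R) * (Sw R * B * Sw R) := by group
  rw [this]
  exact IwR_mul hA.2 hB.2

lemma JR_inv {A : GL (Fin 2) R} (hA : A ∈ JR R) : A⁻¹ ∈ JR R := by
  refine ⟨IwR_inv hA.1, ?_⟩
  have : Sw R * A⁻¹ * Sw R = (Sw R * A * Sw R)⁻¹ := by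
    rw [_root_.mul_inv_rev, _root_.mul_inv_rev, Sw_inv]
    group
  rw [this]
  exact IwR_inv hA.2

lemma upp_mem_JR_iff (x : R) : upp x ∈ JR R ↔ x ∈ 𝔪 := by
  rw [JR_iff]
  have h1 : (upp x : GL (Fin 2) R) ∈ IwR R := upp_mem_IwR x
  have h2 : ((upp x : GL (Fin 2) R) : Matrix (Fin 2) (Fin 2) R) 0 1 = x := by
    rw [upp_val]; simp
  rw [h2]
  tauto

lemma upp_eq_mem_max {x y : R} {j j' : GL (Fin 2) R} (hj : j ∈ JR R) (hj' : j' ∈ JR R)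
    (h : upp x * j = upp y * j') : x - y ∈ 𝔪 := by
  have : upp (x - y) = j' * j⁻¹ := by
    have : upp (-y) * (upp x * j) = upp (-y) * (upp y * j') := by rw [h]
    rw [← mul_assoc, ← mul_assoc, upp_mul, upp_mul, neg_add_cancel] at this
    have h1 : upp (0 : R) = 1 := by
      apply Units.ext
      show (!![1,(0:R);0,1] : Matrix (Fin 2) (Fin 2) R) = 1
      ext i j; fin_cases i <;> fin_cases j <;> simp [Matrix.one_apply]
    rw [h1, one_mul] at this
    have h2 : upp (-y + x) * j * j⁻¹ = j' * j⁻¹ := by rw [this]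
    rw [mul_assoc, mul_inv_cancel, mul_one] at h2
    rw [show x - y = -y + x by ring, h2]
  have := (upp_mem_JR_iff (x - y)).1 (this ▸ JR_mul hj' (JR_inv hj))
  exact this

/-- Right coset normal form: every `a S b` is `a' S (upp x)` for some `a' ∈ IwR`. -/
lemma D_normal_form {a b : GL (Fin 2) R} (ha : a ∈ IwR R) (hb : b ∈ IwR R) :
    ∃ a' ∈ IwR R, ∃ x : R, a * Sw R * b = a' * Sw R * upp x := by
  obtain ⟨u, hu⟩ := (IwR_diag_isUnit hb).1
  set x : R := (b : Matrix (Fin 2) (Fin 2) R) 0 1 * ↑u⁻¹ with hx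
  set j : GL (Fin 2) R := b * upp (-x) with hjdef
  have hj : j ∈ JR R := by
    rw [JR_iff]
    constructor
    · exact IwR_mul hb (upp_mem_IwR _)
    · have : (j : Matrix (Fin 2) (Fin 2) R) 0 1
          = (b : Matrix (Fin 2) (Fin 2) R) 0 0 * (-x) + (b : Matrix (Fin 2) (Fin 2) R) 0 1 := by
        simp only [hjdef, val_mul_entry, upp_val]
        simp
      rw [this, hx, ← hu]
      have : (↑u : R) * -((b : Matrix (Fin 2) (Fin 2) R) 0 1 * (↑u⁻¹ : R))
            + (b : Matrix (Fin 2) (Fin 2) R) 0 1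
          = (b : Matrix (Fin 2) (Fin 2) R) 0 1 * (1 - (↑u⁻¹ : R) * (↑u : R)) := by
        ring
      rw [this, Units.inv_mul, sub_self, mul_zero]
      exact Submodule.zero_mem _
  have hbj : b = j * upp x := by
    rw [hjdef, mul_assoc, upp_mul, neg_add_cancel]
    have h1 : upp (0 : R) = 1 := by
      apply Units.ext
      show (!![1,(0:R);0,1] : Matrix (Fin 2) (Fin 2) R) = 1
      ext i j; fin_cases i <;> fin_cases j <;> simp [Matrix.one_apply]
    rw [h1, mul_one]
  refine ⟨a * (Sw R * j * Sw R), IwR_mul ha hj.2, x, ?_⟩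
  rw [conj_unfold, ← hbj]

/-- shifting the representative by an element of 𝔪. -/
lemma D_shift {x y : R} (hxy : x - y ∈ 𝔪) (a : GL (Fin 2) R) :
    a * Sw R * upp x = (a * low (x - y)) * Sw R * upp y := by
  rw [← Sw_upp_Sw (x - y), conj_unfold, upp_mul, sub_add_cancel]

/-- uniqueness of the representative mod 𝔪. -/
lemma D_unique {x y : R} {a a' : GL (Fin 2) R} (ha : a ∈ IwR R) (ha' : a' ∈ IwR R)
    (h : a * Sw R * upp x = a' * Sw R * upp y) : x - y ∈ 𝔪 := by
  have hx : a'⁻¹ * a = Sw R * upp (y - x) * Sw R := by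
    have h1 : a = a' * Sw R * upp y * (upp x)⁻¹ * (Sw R)⁻¹ := by
      rw [← h]; group
    rw [h1, upp_inv, Sw_inv]
    calc a'⁻¹ * (a' * Sw R * upp y * upp (-x) * Sw R)
        = Sw R * (upp y * upp (-x)) * Sw R := by group
    _ = Sw R * upp (y - x) * Sw R := by rw [upp_mul, show y + -x = y - x by ring]
  have hmem : a'⁻¹ * a ∈ IwR R := IwR_mul (IwR_inv ha') ha
  rw [hx, Sw_upp_Sw] at hmem
  have := (low_mem_IwR_iff _).1 hmem
  rw [show x - y = -(y - x) by ring]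
  exact neg_mem this

end Bruhat

section JDecomp
variable {R : Type*} [CommRing R] [IsDomain R] [IsDiscreteValuationRing R]
local notation "𝔪" => IsLocalRing.maximalIdeal R

lemma upp_zero : upp (0 : R) = 1 := by
  apply Units.ext
  show (!![1,(0:R);0,1] : Matrix (Fin 2) (Fin 2) R) = 1
  ext i j; fin_cases i <;> fin_cases j <;> simp [Matrix.one_apply]

/-- decomposition of the Iwahori into left `J`-cosets. -/
lemma IwR_decomp {G : GL (Fin 2) R} (hG : G ∈ IwR R) :
    ∃ x : R, ∃ j ∈ JR R, G = upp x * j := by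
  obtain ⟨u, hu⟩ := (IwR_diag_isUnit hG).2
  set x : R := (G : Matrix (Fin 2) (Fin 2) R) 0 1 * (↑u⁻¹ : R) with hx
  refine ⟨x, upp (-x) * G, ?_, ?_⟩
  · rw [JR_iff]
    constructor
    · exact IwR_mul (upp_mem_IwR _) hG
    · have : ((upp (-x) * G : GL (Fin 2) R) : Matrix (Fin 2) (Fin 2) R) 0 1
          = (G : Matrix (Fin 2) (Fin 2) R) 0 1 + (-x) * (G : Matrix (Fin 2) (Fin 2) R) 1 1 := by
        simp only [val_mul_entry, upp_val]
        simp
      rw [this, hx, ← hu]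
      have : (G : Matrix (Fin 2) (Fin 2) R) 0 1
            + -((G : Matrix (Fin 2) (Fin 2) R) 0 1 * (↑u⁻¹ : R)) * (↑u : R)
          = (G : Matrix (Fin 2) (Fin 2) R) 0 1 * (1 - (↑u⁻¹ : R) * (↑u : R)) := by ring
      rw [this, Units.inv_mul, sub_self, mul_zero]
      exact Submodule.zero_mem _
  · rw [← mul_assoc, upp_mul, add_neg_cancel, upp_zero, one_mul]

/-- shifting the left coset representative. -/
lemma J_shift {x y : R} (hxy : x - y ∈ 𝔪) {j : GL (Fin 2) R} (hj : j ∈ JR R) :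
    ∃ j' ∈ JR R, upp x * j = upp y * j' := by
  refine ⟨upp (x - y) * j, JR_mul ((upp_mem_JR_iff _).2 hxy) hj, ?_⟩
  rw [← mul_assoc, upp_mul, show y + (x - y) = x by ring]

end JDecomp

section GlMap
variable (R K : Type*)
  [CommRing R] [IsDomain R] [IsDiscreteValuationRing R]
  [Field K] [Algebra R K] [IsFractionRing R K]

noncomputable def matMap : Matrix (Fin 2) (Fin 2) R →+* Matrix (Fin 2) (Fin 2) K :=
  (algebraMap R K).mapMatrix

noncomputable def glMap : GL (Fin 2) R →* GL (Fin 2) K :=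
  Units.map (matMap R K).toMonoidHom

lemma matMap_apply (M : Matrix (Fin 2) (Fin 2) R) (i j : Fin 2) :
    matMap R K M i j = algebraMap R K (M i j) := rfl

lemma matMap_injective : Function.Injective (matMap R K) := by
  intro A B h
  ext i j
  apply IsFractionRing.injective R K
  show matMap R K A i j = matMap R K B i j
  rw [h]

lemma glMap_injective : Function.Injective (glMap R K) :=
  Units.map_injective (matMap_injective R K)

lemma glMap_val (G : GL (Fin 2) R) :
    ((glMap R K G : GL (Fin 2) K) : Matrix (Fin 2) (Fin 2) K)
      = matMap R K (G : Matrix (Fin 2) (Fin 2) R) := rfl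

lemma glMap_inv_val (G : GL (Fin 2) R) :
    (((glMap R K G)⁻¹ : GL (Fin 2) K) : Matrix (Fin 2) (Fin 2) K)
      = matMap R K ((G⁻¹ : GL (Fin 2) R) : Matrix (Fin 2) (Fin 2) R) := by
  rw [← MonoidHom.map_inv]; rfl

end GlMap

section ResSec
variable (R : Type*) [CommRing R] [IsDomain R] [IsDiscreteValuationRing R]

noncomputable def resSec : IsLocalRing.ResidueField R → R :=
  Function.surjInv IsLocalRing.residue_surjective

lemma resSec_residue (t : IsLocalRing.ResidueField R) :
    IsLocalRing.residue R (resSec R t) = t :=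
  Function.surjInv_eq _ t

lemma residue_diff_mem {x y : R} (h : IsLocalRing.residue R x = IsLocalRing.residue R y) :
    x - y ∈ IsLocalRing.maximalIdeal R := by
  rw [← Ideal.Quotient.eq_zero_iff_mem]
  show IsLocalRing.residue R (x - y) = 0
  rw [map_sub, h, sub_self]

lemma diff_mem_residue {x y : R} (h : x - y ∈ IsLocalRing.maximalIdeal R) :
    IsLocalRing.residue R x = IsLocalRing.residue R y := by
  have : IsLocalRing.residue R (x - y) = 0 := Ideal.Quotient.eq_zero_iff_mem.2 h
  rw [map_sub, sub_eq_zero] at this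
  exact this

end ResSec



section HeckeQuadraticRelation

/- `K` is a nonarchimedean local field with ring of integers `R = 𝔬`: `R` is a complete DVR
with finite residue field and fraction field `K`. -/
variable (R K : Type*)
  [CommRing R] [IsDomain R] [IsDiscreteValuationRing R]
  [Finite (IsLocalRing.ResidueField R)] [IsAdicComplete (IsLocalRing.maximalIdeal R) R]
  [Field K] [Algebra R K] [IsFractionRing R K]

/-! ### Bridge lemmas between the R-level and K-level -/

lemma Iwahori_eq_image : IwahoriSet2 R K = glMap R K '' IwR R := by
  ext g
  constructor
  · rintro ⟨h1, h2, r0, hr0, hgr0⟩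
    choose A hA using h1
    choose B hB using h2
    have e1 : matMap R K (Matrix.of A) = (g : Matrix (Fin 2) (Fin 2) K) := by
      ext i j; rw [matMap_apply]; exact (hA i j).symm
    have e2 : matMap R K (Matrix.of B) = ((g⁻¹ : GL (Fin 2) K) : Matrix (Fin 2) (Fin 2) K) := by
      ext i j; rw [matMap_apply]; exact (hB i j).symm
    have hAB : (Matrix.of A) * (Matrix.of B) = 1 := by
      apply matMap_injective R K
      rw [_root_.map_mul, _root_.map_one, e1, e2]
      exact g.mul_inv
    have hBA : (Matrix.of B) * (Matrix.of A) = 1 := by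
      apply matMap_injective R K
      rw [_root_.map_mul, _root_.map_one, e1, e2]
      exact g.inv_mul
    refine ⟨⟨Matrix.of A, Matrix.of B, hAB, hBA⟩, ?_, ?_⟩
    · have : algebraMap R K (A 1 0) = algebraMap R K r0 := by
        rw [← hA 1 0]; exact hgr0
      have h := IsFractionRing.injective R K this
      show A 1 0 ∈ IsLocalRing.maximalIdeal R
      rw [h]; exact hr0
    · apply Units.ext
      show matMap R K (Matrix.of A) = (g : Matrix (Fin 2) (Fin 2) K)
      exact e1
  · rintro ⟨G, hG, rfl⟩
    refine ⟨?_, ?_, ?_⟩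
    · intro i j
      exact ⟨(G : Matrix (Fin 2) (Fin 2) R) i j, by rw [glMap_val, matMap_apply]⟩
    · intro i j
      exact ⟨((G⁻¹ : GL (Fin 2) R) : Matrix (Fin 2) (Fin 2) R) i j, by
        rw [glMap_inv_val, matMap_apply]⟩
    · exact ⟨(G : Matrix (Fin 2) (Fin 2) R) 1 0, hG, by rw [glMap_val, matMap_apply]⟩

lemma memI_iff (g : GL (Fin 2) K) :
    g ∈ IwahoriSet2 R K ↔ ∃ G ∈ IwR R, glMap R K G = g := by
  rw [Iwahori_eq_image R K]
  exact Iff.rfl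

lemma glMap_mem_I {G : GL (Fin 2) R} :
    glMap R K G ∈ IwahoriSet2 R K ↔ G ∈ IwR R := by
  rw [memI_iff]
  constructor
  · rintro ⟨G', hG', hG'eq⟩
    rwa [← glMap_injective R K hG'eq]
  · intro h; exact ⟨G, h, rfl⟩

lemma I_one : (1 : GL (Fin 2) K) ∈ IwahoriSet2 R K := by
  have : glMap R K 1 = 1 := map_one _
  rw [← this]
  exact (glMap_mem_I R K).2 IwR_one

lemma I_mul {g h : GL (Fin 2) K} (hg : g ∈ IwahoriSet2 R K) (hh : h ∈ IwahoriSet2 R K) :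
    g * h ∈ IwahoriSet2 R K := by
  obtain ⟨G, hG, rfl⟩ := (memI_iff R K g).1 hg
  obtain ⟨H, hH, rfl⟩ := (memI_iff R K h).1 hh
  rw [← _root_.map_mul]
  exact (glMap_mem_I R K).2 (IwR_mul hG hH)

lemma I_inv {g : GL (Fin 2) K} (hg : g ∈ IwahoriSet2 R K) : g⁻¹ ∈ IwahoriSet2 R K := by
  obtain ⟨G, hG, rfl⟩ := (memI_iff R K g).1 hg
  rw [← MonoidHom.map_inv]
  exact (glMap_mem_I R K).2 (IwR_inv hG)

section WithS
variable (s : GL (Fin 2) K)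

lemma sEq (hs : (s : Matrix (Fin 2) (Fin 2) K) = !![0, 1; 1, 0]) : s = glMap R K (Sw R) := by
  apply Units.ext
  rw [glMap_val, hs]
  ext i j
  rw [matMap_apply]
  show _ = algebraMap R K ((!![0,1;1,0] : Matrix (Fin 2) (Fin 2) R) i j)
  fin_cases i <;> fin_cases j <;> simp

include R in
lemma s_mul_s (hs : (s : Matrix (Fin 2) (Fin 2) K) = !![0, 1; 1, 0]) : s * s = 1 := by
  rw [sEq R K s hs, ← _root_.map_mul, Sw_mul_Sw, _root_.map_one]

include R in
lemma s_inv (hs : (s : Matrix (Fin 2) (Fin 2) K) = !![0, 1; 1, 0]) : s⁻¹ = s := by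
  rw [inv_eq_iff_mul_eq_one, s_mul_s R K s hs]

lemma memD_iff (hs : (s : Matrix (Fin 2) (Fin 2) K) = !![0, 1; 1, 0]) (g : GL (Fin 2) K) :
    g ∈ doubleCoset R K s ↔ ∃ a ∈ IwR R, ∃ b ∈ IwR R, g = glMap R K (a * Sw R * b) := by
  constructor
  · rintro ⟨x, hx, y, hy, rfl⟩
    obtain ⟨A, hA, rfl⟩ := (memI_iff R K x).1 hx
    obtain ⟨B, hB, rfl⟩ := (memI_iff R K y).1 hy
    exact ⟨A, hA, B, hB, by rw [_root_.map_mul, _root_.map_mul, ← sEq R K s hs]⟩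
  · rintro ⟨A, hA, B, hB, rfl⟩
    exact ⟨glMap R K A, (glMap_mem_I R K).2 hA, glMap R K B, (glMap_mem_I R K).2 hB, by
      rw [_root_.map_mul, _root_.map_mul, ← sEq R K s hs]⟩

lemma glMap_mem_D (hs : (s : Matrix (Fin 2) (Fin 2) K) = !![0, 1; 1, 0]) {G : GL (Fin 2) R} :
    glMap R K G ∈ doubleCoset R K s ↔ ∃ a ∈ IwR R, ∃ b ∈ IwR R, G = a * Sw R * b := by
  rw [memD_iff R K s hs]
  constructor
  · rintro ⟨A, hA, B, hB, h⟩
    exact ⟨A, hA, B, hB, glMap_injective R K h⟩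
  · rintro ⟨A, hA, B, hB, rfl⟩
    exact ⟨A, hA, B, hB, rfl⟩

lemma D_disjoint_I (hs : (s : Matrix (Fin 2) (Fin 2) K) = !![0, 1; 1, 0]) {g : GL (Fin 2) K} (hg : g ∈ doubleCoset R K s) :
    g ∉ IwahoriSet2 R K := by
  intro hgI
  obtain ⟨A, hA, B, hB, rfl⟩ := (memD_iff R K s hs g).1 hg
  exact bruhat_disjoint hA hB ((glMap_mem_I R K).1 hgI)

lemma D_inv (hs : (s : Matrix (Fin 2) (Fin 2) K) = !![0, 1; 1, 0]) {g : GL (Fin 2) K} (hg : g ∈ doubleCoset R K s) :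
    g⁻¹ ∈ doubleCoset R K s := by
  obtain ⟨A, hA, B, hB, rfl⟩ := (memD_iff R K s hs g).1 hg
  rw [← MonoidHom.map_inv]
  apply (glMap_mem_D R K s hs).2
  refine ⟨B⁻¹, IwR_inv hB, A⁻¹, IwR_inv hA, ?_⟩
  rw [_root_.mul_inv_rev, _root_.mul_inv_rev, Sw_inv, mul_assoc]

lemma D_mul_left {h g : GL (Fin 2) K} (hh : h ∈ IwahoriSet2 R K) :
    h * g ∈ doubleCoset R K s ↔ g ∈ doubleCoset R K s := by
  constructor
  · intro hmem
    have : g = h⁻¹ * (h * g) := by group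
    rw [this]
    obtain ⟨x, hx, y, hy, hxy⟩ := hmem
    exact ⟨h⁻¹ * x, I_mul R K (I_inv R K hh) hx, y, hy, by rw [hxy]; group⟩
  · rintro ⟨x, hx, y, hy, rfl⟩
    exact ⟨h * x, I_mul R K hh hx, y, hy, by group⟩

lemma D_mul_right {h g : GL (Fin 2) K} (hh : h ∈ IwahoriSet2 R K) :
    g * h ∈ doubleCoset R K s ↔ g ∈ doubleCoset R K s := by
  constructor
  · intro hmem
    have : g = (g * h) * h⁻¹ := by group
    rw [this]
    obtain ⟨x, hx, y, hy, hxy⟩ := hmem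
    exact ⟨x, hx, y * h⁻¹, I_mul R K hy (I_inv R K hh), by rw [hxy]; group⟩
  · rintro ⟨x, hx, y, hy, rfl⟩
    exact ⟨x, hx, y * h, I_mul R K hy hh, by group⟩

lemma D_mul_D (hs : (s : Matrix (Fin 2) (Fin 2) K) = !![0, 1; 1, 0]) {g₁ g₂ : GL (Fin 2) K}
    (h₁ : g₁ ∈ doubleCoset R K s) (h₂ : g₂ ∈ doubleCoset R K s) :
    g₁ * g₂ ∈ IwahoriSet2 R K ∪ doubleCoset R K s := by
  obtain ⟨A, hA, B, hB, rfl⟩ := (memD_iff R K s hs g₁).1 h₁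
  obtain ⟨A', hA', B', hB', rfl⟩ := (memD_iff R K s hs g₂).1 h₂
  rw [← _root_.map_mul]
  rcases bruhat_cover ((A * Sw R * B) * (A' * Sw R * B')) with h | ⟨a, ha, b, hb, h⟩
  · exact Or.inl ((glMap_mem_I R K).2 h)
  · exact Or.inr ((glMap_mem_D R K s hs).2 ⟨a, ha, b, hb, h⟩)

end WithS

/-! ### Coset decompositions at the K-level -/

noncomputable def nuK (t : IsLocalRing.ResidueField R) : GL (Fin 2) K :=
  glMap R K (upp (resSec R t))

lemma nuK_mem_I (t : IsLocalRing.ResidueField R) : nuK R K t ∈ IwahoriSet2 R K :=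
  (glMap_mem_I R K).2 (upp_mem_IwR _)

section WithS2
variable (s : GL (Fin 2) K)

noncomputable def FamK (t : IsLocalRing.ResidueField R) : Set (GL (Fin 2) K) :=
  (fun y => y * (s * nuK R K t)⁻¹) ⁻¹' IwahoriSet2 R K

def JsetK : Set (GL (Fin 2) K) :=
  IwahoriSet2 R K ∩ (fun y => s * y * s) ⁻¹' IwahoriSet2 R K

def XsetK : Set (GL (Fin 2) K) := IwahoriSet2 R K \ JsetK R K s

noncomputable def GFamK (t : IsLocalRing.ResidueField R) : Set (GL (Fin 2) K) :=
  (fun y => (nuK R K t)⁻¹ * y) ⁻¹' JsetK R K s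

noncomputable def HFamK (t : IsLocalRing.ResidueField R) : Set (GL (Fin 2) K) :=
  (fun y => s * (y * (nuK R K t)⁻¹) * s) ⁻¹' XsetK R K s

lemma s_nu (hs : (s : Matrix (Fin 2) (Fin 2) K) = !![0, 1; 1, 0]) (t : IsLocalRing.ResidueField R) :
    s * nuK R K t = glMap R K (Sw R * upp (resSec R t)) := by
  rw [_root_.map_mul, ← sEq R K s hs]; rfl

lemma D_eq_iUnion (hs : (s : Matrix (Fin 2) (Fin 2) K) = !![0, 1; 1, 0]) :
    doubleCoset R K s = ⋃ t, FamK R K s t := by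
  ext g
  simp only [Set.mem_iUnion]
  constructor
  · intro hg
    obtain ⟨a, ha, b, hb, rfl⟩ := (memD_iff R K s hs g).1 hg
    obtain ⟨a', ha', x, hx⟩ := D_normal_form ha hb
    set t := IsLocalRing.residue R x with ht
    have hdiff : x - resSec R t ∈ IsLocalRing.maximalIdeal R :=
      residue_diff_mem R (by rw [resSec_residue])
    have hshift := D_shift hdiff a'
    refine ⟨t, ?_⟩
    show glMap R K (a * Sw R * b) * (s * nuK R K t)⁻¹ ∈ IwahoriSet2 R K
    rw [hx, hshift, s_nu R K s hs t, ← MonoidHom.map_inv, ← _root_.map_mul]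
    apply (glMap_mem_I R K).2
    have hsimp : a' * low (x - resSec R t) * Sw R * upp (resSec R t) *
        (Sw R * upp (resSec R t))⁻¹ = a' * low (x - resSec R t) := by group
    rw [hsimp]
    exact IwR_mul ha' ((low_mem_IwR_iff _).2 hdiff)
  · rintro ⟨t, ht⟩
    obtain ⟨a, ha, hEq⟩ := (memI_iff R K _).1 ht
    have hEq2 : glMap R K a = g * (s * nuK R K t)⁻¹ := hEq
    apply (memD_iff R K s hs g).2
    refine ⟨a, ha, upp (resSec R t), upp_mem_IwR _, ?_⟩
    have hg : g = glMap R K a * (s * nuK R K t) := by rw [hEq2]; group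
    rw [hg, s_nu R K s hs t, ← _root_.map_mul, ← mul_assoc]

lemma Fam_disjoint (hs : (s : Matrix (Fin 2) (Fin 2) K) = !![0, 1; 1, 0]) :
    Pairwise (Function.onFun Disjoint (FamK R K s)) := by
  intro t t' hne
  rw [Function.onFun, Set.disjoint_left]
  intro y hyt hyt'
  obtain ⟨a, ha, hEq⟩ := (memI_iff R K _).1 hyt
  obtain ⟨a', ha', hEq'⟩ := (memI_iff R K _).1 hyt'
  have hEq2 : glMap R K a = y * (s * nuK R K t)⁻¹ := hEq
  have hEq2' : glMap R K a' = y * (s * nuK R K t')⁻¹ := hEq'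
  have hy1 : y = glMap R K (a * (Sw R * upp (resSec R t))) := by
    rw [_root_.map_mul, ← s_nu R K s hs t, hEq2]; group
  have hy2 : y = glMap R K (a' * (Sw R * upp (resSec R t'))) := by
    rw [_root_.map_mul, ← s_nu R K s hs t', hEq2']; group
  have h := glMap_injective R K (hy1.symm.trans hy2)
  rw [← mul_assoc, ← mul_assoc] at h
  have hm := D_unique ha ha' h
  apply hne
  rw [← resSec_residue (R := R) t, ← resSec_residue (R := R) t']
  exact diff_mem_residue R hm

lemma glMap_mem_J (hs : (s : Matrix (Fin 2) (Fin 2) K) = !![0, 1; 1, 0]) {G : GL (Fin 2) R} :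
    glMap R K G ∈ JsetK R K s ↔ G ∈ JR R := by
  unfold JsetK JR
  have hconj : s * glMap R K G * s = glMap R K (Sw R * G * Sw R) := by
    rw [_root_.map_mul, _root_.map_mul, ← sEq R K s hs]
  constructor
  · rintro ⟨h1, h2⟩
    refine ⟨(glMap_mem_I R K).1 h1, ?_⟩
    have : s * glMap R K G * s ∈ IwahoriSet2 R K := h2
    rw [hconj] at this
    exact (glMap_mem_I R K).1 this
  · rintro ⟨h1, h2⟩
    refine ⟨(glMap_mem_I R K).2 h1, ?_⟩
    show s * glMap R K G * s ∈ IwahoriSet2 R K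
    rw [hconj]
    exact (glMap_mem_I R K).2 h2

lemma I_eq_iUnion (hs : (s : Matrix (Fin 2) (Fin 2) K) = !![0, 1; 1, 0]) :
    IwahoriSet2 R K = ⋃ t, GFamK R K s t := by
  ext g
  simp only [Set.mem_iUnion]
  constructor
  · intro hg
    obtain ⟨G, hG, rfl⟩ := (memI_iff R K g).1 hg
    obtain ⟨x, j, hj, hGx⟩ := IwR_decomp hG
    set t := IsLocalRing.residue R x with ht
    have hdiff : x - resSec R t ∈ IsLocalRing.maximalIdeal R :=
      residue_diff_mem R (by rw [resSec_residue])
    obtain ⟨j', hj', hshift⟩ := J_shift hdiff hj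
    refine ⟨t, ?_⟩
    show (nuK R K t)⁻¹ * glMap R K G ∈ JsetK R K s
    have : (nuK R K t)⁻¹ * glMap R K G = glMap R K j' := by
      rw [hGx, hshift]
      show (glMap R K (upp (resSec R t)))⁻¹ * glMap R K (upp (resSec R t) * j') = _
      rw [← MonoidHom.map_inv, ← _root_.map_mul]
      congr 1
      group
    rw [this]
    exact (glMap_mem_J R K s hs).2 hj'
  · rintro ⟨t, ht⟩
    have hw : (nuK R K t)⁻¹ * g ∈ IwahoriSet2 R K := (Set.inter_subset_left) ht
    have : g = nuK R K t * ((nuK R K t)⁻¹ * g) := by group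
    rw [this]
    exact I_mul R K (nuK_mem_I R K t) hw

lemma GFam_disjoint (hs : (s : Matrix (Fin 2) (Fin 2) K) = !![0, 1; 1, 0]) :
    Pairwise (Function.onFun Disjoint (GFamK R K s)) := by
  intro t t' hne
  rw [Function.onFun, Set.disjoint_left]
  intro y hyt hyt'
  have h1 : (nuK R K t)⁻¹ * y ∈ JsetK R K s := hyt
  have h2 : (nuK R K t')⁻¹ * y ∈ JsetK R K s := hyt'
  obtain ⟨j, hjI, hjEq⟩ := (memI_iff R K _).1 (Set.inter_subset_left h1)
  obtain ⟨j', hjI', hjEq'⟩ := (memI_iff R K _).1 (Set.inter_subset_left h2)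
  rw [← hjEq] at h1
  rw [← hjEq'] at h2
  have hj : j ∈ JR R := (glMap_mem_J R K s hs).1 h1
  have hj' : j' ∈ JR R := (glMap_mem_J R K s hs).1 h2
  have hy1 : y = glMap R K (upp (resSec R t) * j) := by
    rw [_root_.map_mul, hjEq]
    show y = nuK R K t * ((nuK R K t)⁻¹ * y)
    group
  have hy2 : y = glMap R K (upp (resSec R t') * j') := by
    rw [_root_.map_mul, hjEq']
    show y = nuK R K t' * ((nuK R K t')⁻¹ * y)
    group
  have h := glMap_injective R K (hy1.symm.trans hy2)
  have hm := upp_eq_mem_max hj hj' h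
  apply hne
  rw [← resSec_residue (R := R) t, ← resSec_residue (R := R) t']
  exact diff_mem_residue R hm

lemma sD_decomp (hs : (s : Matrix (Fin 2) (Fin 2) K) = !![0, 1; 1, 0]) :
    {y | s * y ∈ doubleCoset R K s} ∩ doubleCoset R K s = ⋃ t, HFamK R K s t := by
  have hss := s_mul_s R K s hs
  ext y
  simp only [Set.mem_iUnion, Set.mem_inter_iff, Set.mem_setOf_eq]
  constructor
  · rintro ⟨hsy, hy⟩
    rw [D_eq_iUnion R K s hs] at hsy
    obtain ⟨t, ht⟩ := Set.mem_iUnion.1 hsy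
    have hwdef : (s * y) * (s * nuK R K t)⁻¹ = s * (y * (nuK R K t)⁻¹) * s := by
      rw [_root_.mul_inv_rev, s_inv R K s hs]
      group
    have hwI : s * (y * (nuK R K t)⁻¹) * s ∈ IwahoriSet2 R K := by
      rw [← hwdef]; exact ht
    refine ⟨t, ?_⟩
    show s * (y * (nuK R K t)⁻¹) * s ∈ XsetK R K s
    refine ⟨hwI, ?_⟩
    intro hwJ
    have hsws : s * (s * (y * (nuK R K t)⁻¹) * s) * s = y * (nuK R K t)⁻¹ := by
      have hassoc : s * (s * (y * (nuK R K t)⁻¹) * s) * s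
          = (s * s) * (y * (nuK R K t)⁻¹) * (s * s) := by group
      rw [hassoc, hss, one_mul, mul_one]
    have hyv : s * (s * (y * (nuK R K t)⁻¹) * s) * s ∈ IwahoriSet2 R K := hwJ.2
    rw [hsws] at hyv
    have : y = (y * (nuK R K t)⁻¹) * nuK R K t := by group
    have hyI : y ∈ IwahoriSet2 R K := by
      rw [this]; exact I_mul R K hyv (nuK_mem_I R K t)
    exact D_disjoint_I R K s hs hy hyI
  · rintro ⟨t, ht⟩
    have hwX : s * (y * (nuK R K t)⁻¹) * s ∈ XsetK R K s := ht
    set w := s * (y * (nuK R K t)⁻¹) * s with hwdef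
    obtain ⟨hwI, hwnJ⟩ := hwX
    obtain ⟨a, ha, haEq⟩ := (memI_iff R K _).1 hwI
    have hsws : s * w * s = y * (nuK R K t)⁻¹ := by
      have hassoc : s * w * s = (s * s) * (y * (nuK R K t)⁻¹) * (s * s) := by
        rw [hwdef]; group
      rw [hassoc, hss, one_mul, mul_one]
    have hyEq : y = s * w * (s * nuK R K t) := by
      have h0 : (y * (nuK R K t)⁻¹) * nuK R K t = y := by group
      rw [← h0, ← hsws]; group
    have hyEq2 : y = (s * w * s) * nuK R K t := by
      rw [hsws]; group
    have hsyEq : s * y = w * (s * nuK R K t) := by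
      rw [hyEq]
      have hassoc : s * (s * w * (s * nuK R K t)) = (s * s) * (w * (s * nuK R K t)) := by group
      rw [hassoc, hss, one_mul]
    constructor
    · -- s * y ∈ D
      rw [hsyEq, ← haEq, s_nu R K s hs t, ← _root_.map_mul]
      apply (glMap_mem_D R K s hs).2
      exact ⟨a, ha, upp (resSec R t), upp_mem_IwR _, by rw [← mul_assoc]⟩
    · -- y ∈ D
      have hanJ : a ∉ JR R := by
        intro h
        apply hwnJ
        rw [← haEq]
        exact (glMap_mem_J R K s hs).2 h
      have ha01 : (a : Matrix (Fin 2) (Fin 2) R) 0 1 ∉ IsLocalRing.maximalIdeal R := by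
        intro h
        exact hanJ ((JR_iff a).2 ⟨ha, h⟩)
      have hSaS : Sw R * a * Sw R ∉ IwR R := by
        intro h
        apply ha01
        rw [← conj10 a]
        exact h
      rcases bruhat_cover (Sw R * a * Sw R) with h | ⟨c, hc, d, hd, hEq⟩
      · exact absurd h hSaS
      have hswsD : s * w * s ∈ doubleCoset R K s := by
        rw [← haEq]
        have hc2 : s * glMap R K a * s = glMap R K (Sw R * a * Sw R) := by
          rw [_root_.map_mul, _root_.map_mul, ← sEq R K s hs]
        rw [hc2]
        exact (glMap_mem_D R K s hs).2 ⟨c, hc, d, hd, hEq⟩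
      rw [hyEq2]
      exact (D_mul_right R K s (nuK_mem_I R K t)).2 hswsD

lemma HFam_disjoint (hs : (s : Matrix (Fin 2) (Fin 2) K) = !![0, 1; 1, 0]) :
    Pairwise (Function.onFun Disjoint (HFamK R K s)) := by
  intro t t' hne
  rw [Function.onFun, Set.disjoint_left]
  intro y hyt hyt'
  have key : ∀ u : IsLocalRing.ResidueField R, y ∈ HFamK R K s u → s * y ∈ FamK R K s u := by
    intro u hu
    show (s * y) * (s * nuK R K u)⁻¹ ∈ IwahoriSet2 R K
    have hwdef : (s * y) * (s * nuK R K u)⁻¹ = s * (y * (nuK R K u)⁻¹) * s := by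
      rw [_root_.mul_inv_rev, s_inv R K s hs]
      group
    rw [hwdef]
    exact hu.1
  exact Set.disjoint_left.1 (Fam_disjoint R K s hs hne) (key t hyt) (key t' hyt')

end WithS2

/-- the quadratic relation `e_s ⋆ e_s = (q-1)·e_s + q·e_1` of the
Iwahori–Hecke algebra. Let `K` be a nonarchimedean local field with residue field of
cardinality `q`, let `I` be the standard Iwahori subgroup of `GL(2,K)`, `s = [[0,1],[1,0]]`,
and let `μ` be a left and right invariant Haar measure on `GL(2,K)` with `μ(I) = 1`. Then
for every `g`:
`∫ 1_{IsI}(g y) 1_{IsI}(y⁻¹) dμ(y) = (q-1)·1_{IsI}(g) + q·1_I(g)`. -/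
theorem hecke_quadratic_relation (q : ℕ)
    (hq : Nat.card (IsLocalRing.ResidueField R) = q)
    [MeasurableSpace (GL (Fin 2) K)]
    [MeasurableMul (GL (Fin 2) K)] [MeasurableInv (GL (Fin 2) K)]
    (μ : Measure (GL (Fin 2) K))
    [μ.IsMulLeftInvariant] [μ.IsMulRightInvariant]
    (hI : MeasurableSet (IwahoriSet2 R K)) (hμI : μ (IwahoriSet2 R K) = 1)
    (s : GL (Fin 2) K)
    (hs : (s : Matrix (Fin 2) (Fin 2) K) = !![0, 1; 1, 0])
    (g : GL (Fin 2) K) :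
    ∫ y : GL (Fin 2) K,
        ((doubleCoset R K s).indicator (fun _ => (1 : ℝ)) (g * y)) *
          ((doubleCoset R K s).indicator (fun _ => (1 : ℝ)) y⁻¹) ∂μ =
      ((q : ℝ) - 1) * (doubleCoset R K s).indicator (fun _ => (1 : ℝ)) g +
        (q : ℝ) * (IwahoriSet2 R K).indicator (fun _ => (1 : ℝ)) g := by
  classical
  have hss := s_mul_s R K s hs
  have hfin : Fintype (IsLocalRing.ResidueField R) := Fintype.ofFinite _
  have hq1 : 1 ≤ q := by
    rw [← hq]
    exact Nat.card_pos
  have htsum : ∀ c : ENNReal, ∑' _ : IsLocalRing.ResidueField R, c = (q : ENNReal) * c := by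
    intro c
    rw [tsum_fintype]
    rw [Finset.sum_const, nsmul_eq_mul]
    congr 2
    rw [Finset.card_univ, ← Nat.card_eq_fintype_card, hq]
  -- measurability
  have measFam : ∀ t, MeasurableSet (FamK R K s t) := fun t =>
    (measurable_mul_const ((s * nuK R K t)⁻¹)) hI
  have measD : MeasurableSet (doubleCoset R K s) := by
    rw [D_eq_iUnion R K s hs]
    exact MeasurableSet.iUnion measFam
  have measJ : MeasurableSet (JsetK R K s) := by
    refine hI.inter ?_
    exact ((measurable_const_mul s).mul_const s) hI
  have measGFam : ∀ t, MeasurableSet (GFamK R K s t) := fun t =>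
    (measurable_const_mul ((nuK R K t)⁻¹)) measJ
  have measX : MeasurableSet (XsetK R K s) := hI.diff measJ
  have measHFam : ∀ t, MeasurableSet (HFamK R K s t) := fun t =>
    (((measurable_mul_const ((nuK R K t)⁻¹)).const_mul s).mul_const s) measX
  -- measures
  have μFam : ∀ t, μ (FamK R K s t) = 1 := fun t =>
    (measure_preimage_mul_right μ _ _).trans hμI
  have μD : μ (doubleCoset R K s) = (q : ENNReal) := by
    rw [D_eq_iUnion R K s hs, measure_iUnion (Fam_disjoint R K s hs) measFam]
    simp only [μFam]
    rw [htsum, mul_one]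
  have μGFam : ∀ t, μ (GFamK R K s t) = μ (JsetK R K s) := fun t =>
    measure_preimage_mul μ _ _
  have hqJ : (q : ENNReal) * μ (JsetK R K s) = 1 := by
    rw [← hμI, I_eq_iUnion R K s hs, measure_iUnion (GFam_disjoint R K s hs) measGFam]
    simp only [μGFam]
    rw [htsum]
  have μJle : μ (JsetK R K s) ≤ 1 := by
    rw [← hμI]
    exact measure_mono Set.inter_subset_left
  have μJfin : μ (JsetK R K s) ≠ ⊤ := by
    intro h
    rw [h] at μJle
    exact (by simp : ¬ ((⊤ : ENNReal) ≤ 1)) μJle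
  have μX : μ (XsetK R K s) = 1 - μ (JsetK R K s) := by
    have hsub : JsetK R K s ⊆ IwahoriSet2 R K := Set.inter_subset_left
    rw [show XsetK R K s = IwahoriSet2 R K \ JsetK R K s from rfl,
      measure_diff hsub measJ.nullMeasurableSet μJfin, hμI]
  have μHFam : ∀ t, μ (HFamK R K s t) = μ (XsetK R K s) := by
    intro t
    show μ ((fun y => s * (y * (nuK R K t)⁻¹) * s) ⁻¹' XsetK R K s) = _
    have hcomp : (fun y : GL (Fin 2) K => s * (y * (nuK R K t)⁻¹) * s)
        = (fun z => z * s) ∘ (fun z => s * z) ∘ (fun y => y * (nuK R K t)⁻¹) := rfl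
    rw [hcomp, Set.preimage_comp, Set.preimage_comp,
      measure_preimage_mul_right μ _ _, measure_preimage_mul μ _ _,
      measure_preimage_mul_right μ _ _]
  have key : μ ({y | s * y ∈ doubleCoset R K s} ∩ doubleCoset R K s) = (q : ENNReal) - 1 := by
    rw [sD_decomp R K s hs, measure_iUnion (HFam_disjoint R K s hs) measHFam]
    simp only [μHFam]
    rw [htsum]
    have hsum : (q : ENNReal) * μ (XsetK R K s) + (q : ENNReal) * μ (JsetK R K s) = (q : ENNReal) := by
      rw [← mul_add, μX, tsub_add_cancel_of_le μJle, mul_one]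
    rw [hqJ] at hsum
    exact ENNReal.eq_sub_of_add_eq (by simp) hsum
  -- the integrand
  have hDinv : ∀ y : GL (Fin 2) K, y⁻¹ ∈ doubleCoset R K s ↔ y ∈ doubleCoset R K s := by
    intro y
    constructor
    · intro h
      have := D_inv R K s hs h
      rwa [inv_inv] at this
    · exact D_inv R K s hs
  set Ag : Set (GL (Fin 2) K) :=
    (fun y => g * y) ⁻¹' doubleCoset R K s ∩ doubleCoset R K s with hAgdef
  have measAg : MeasurableSet Ag :=
    ((measurable_const_mul g) measD).inter measD
  have hinteg : ∀ y : GL (Fin 2) K,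
      ((doubleCoset R K s).indicator (fun _ => (1 : ℝ)) (g * y)) *
        ((doubleCoset R K s).indicator (fun _ => (1 : ℝ)) y⁻¹)
      = Ag.indicator (fun _ => (1 : ℝ)) y := by
    intro y
    by_cases h1 : g * y ∈ doubleCoset R K s <;> by_cases h2 : y ∈ doubleCoset R K s
    · rw [Set.indicator_of_mem h1, Set.indicator_of_mem ((hDinv y).2 h2),
        Set.indicator_of_mem (Set.mem_inter (Set.mem_preimage.2 h1) h2)]
      norm_num
    · rw [Set.indicator_of_notMem (fun h => h2 ((hDinv y).1 h)),
        Set.indicator_of_notMem (fun h : y ∈ Ag => h2 h.2)]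
      ring
    · rw [Set.indicator_of_notMem h1,
        Set.indicator_of_notMem (fun h : y ∈ Ag => h1 h.1)]
      ring
    · rw [Set.indicator_of_notMem h1,
        Set.indicator_of_notMem (fun h : y ∈ Ag => h1 h.1)]
      ring
  simp only [hinteg]
  rw [integral_indicator_const (1 : ℝ) measAg, smul_eq_mul, mul_one, measureReal_def]
  by_cases hgI : g ∈ IwahoriSet2 R K
  · have hgD : g ∉ doubleCoset R K s := fun h => D_disjoint_I R K s hs h hgI
    have hAgD : Ag = doubleCoset R K s := by
      ext y
      constructor
      · rintro ⟨_, h2⟩; exact h2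
      · intro hy
        exact ⟨(D_mul_left R K s hgI).2 hy, hy⟩
    rw [hAgD, μD, Set.indicator_of_notMem hgD, Set.indicator_of_mem hgI]
    simp
  by_cases hgD : g ∈ doubleCoset R K s
  · obtain ⟨a, ha, b, hb, hg⟩ := (memD_iff R K s hs g).1 hgD
    have haI : glMap R K a ∈ IwahoriSet2 R K := (glMap_mem_I R K).2 ha
    have hbI : glMap R K b ∈ IwahoriSet2 R K := (glMap_mem_I R K).2 hb
    have hgeq : g = glMap R K a * s * glMap R K b := by
      rw [hg, sEq R K s hs, _root_.map_mul, _root_.map_mul]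
    have hAg : Ag = (fun y => glMap R K b * y) ⁻¹'
        ({y | s * y ∈ doubleCoset R K s} ∩ doubleCoset R K s) := by
      ext y
      simp only [hAgdef, Set.mem_inter_iff, Set.mem_preimage, Set.mem_setOf_eq]
      constructor
      · rintro ⟨h1, h2⟩
        constructor
        · have he : s * (glMap R K b * y) = (glMap R K a)⁻¹ * (g * y) := by
            rw [hgeq]; group
          rw [he]
          exact (D_mul_left R K s (I_inv R K haI)).2 h1
        · exact (D_mul_left R K s hbI).2 h2
      · rintro ⟨h1, h2⟩
        constructor
        · have he : g * y = glMap R K a * (s * (glMap R K b * y)) := by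
            rw [hgeq]; group
          rw [he]
          exact (D_mul_left R K s haI).2 h1
        · exact (D_mul_left R K s hbI).1 h2
    rw [hAg, measure_preimage_mul μ _ _, key,
      Set.indicator_of_mem hgD, Set.indicator_of_notMem (fun h => D_disjoint_I R K s hs hgD h)]
    have htr : ((q : ENNReal) - 1).toReal = (q : ℝ) - 1 := by
      have h : ((q : ENNReal) - 1) = ((q - 1 : ℕ) : ENNReal) := by
        rw [ENNReal.natCast_sub]; norm_num
      rw [h, ENNReal.toReal_natCast, Nat.cast_sub hq1, Nat.cast_one]
    rw [htr]
    ring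
  · have hAgE : Ag = ∅ := by
      ext y
      simp only [hAgdef, Set.mem_inter_iff, Set.mem_preimage, Set.mem_empty_iff_false,
        iff_false, not_and]
      intro h1 h2
      have hgmem : g ∈ IwahoriSet2 R K ∪ doubleCoset R K s := by
        have hgy : g = (g * y) * y⁻¹ := by group
        rw [hgy]
        exact D_mul_D R K s hs h1 (D_inv R K s hs h2)
      rcases hgmem with h | h
      · exact hgI h
      · exact hgD h
    rw [hAgE, measure_empty, Set.indicator_of_notMem hgD, Set.indicator_of_notMem hgI]
    simp

end HeckeQuadraticRelation
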